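/- arXiv:cs/0404040 — 5 statements merged into one kernel-verified Lean document; each statement's English description precedes it below -/
import Mathlib

section
/- In the security game with n ≥ 2 players, where each player i chooses a security level s_i ∈ [0, P] (P > 0), and a player's payoff is −P if her security level equals the minimum of all chosen levels, and −s_i otherwise, the unique pure Nash equilibrium is the profile where every player chooses s_i = P. -/
/-- Payoff in the security game: a player whose security level equals the
minimum of all chosen levels is compromised and pays the penalty `P`;
every other player pays her own security level. -/
noncomputable def secPayoff (n : ℕ) (P : ℝ) (s : Fin n → ℝ) (i : Fin n) : ℝ :=
  if s i = sInf (Set.range s) then -P else -(s i)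

/-- Pure Nash equilibrium of the security game with levels restricted to `[0,P]`:
no player can strictly increase her payoff by a unilateral deviation. -/
def secNash (n : ℕ) (P : ℝ) (s : Fin n → ℝ) : Prop :=
  ∀ i : Fin n, ∀ t ∈ Set.Icc (0:ℝ) P,
    secPayoff n P (Function.update s i t) i ≤ secPayoff n P s i

/-!
If the minimum level `m` is below `P`, pick a player `j` other than a minimiser. Her cost
`-u_j` lies in `(m, P]` (it is `P` if she is compromised, otherwise `s_j > m`), and moving to
any level strictly between `m` and that cost is a profitable deviation: the minimiser still
sits at `m`, so `j` is not compromised and pays less. Hence `m = P`, i.e. every level is `P`.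
Conversely, from the all-`P` profile a deviation to `t ≤ P` makes the deviator the minimum,
so she still pays `P`.
-/

open Set Function

section FiniteRange

variable {ι α : Type*} [Finite ι] [ConditionallyCompleteLinearOrder α] [DecidableEq ι]

theorem sInf_range_update_of_forall_le {s : ι → α} {i : ι} {t : α} (h : ∀ j ≠ i, t ≤ s j) :
    sInf (range (update s i t)) = t := by
  refine le_antisymm (csInf_le (finite_range _).bddBelow ⟨i, update_self i t s⟩) ?_
  refine le_csInf ⟨_, mem_range_self i⟩ ?_
  rintro _ ⟨j, rfl⟩
  rcases eq_or_ne j i with rfl | hj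
  · simp
  · simpa [update_of_ne hj] using h j hj

theorem sInf_range_update_lt {s : ι → α} {i j : ι} {t : α} (hij : i ≠ j) (hlt : s i < t) :
    sInf (range (update s j t)) < t :=
  (csInf_le (finite_range _).bddBelow ⟨i, update_of_ne hij t s⟩).trans_lt hlt

end FiniteRange

section SecurityGame

variable {n : ℕ} {P : ℝ}

theorem secPayoff_const (i : Fin n) : secPayoff n P (fun _ => P) i = -P := by
  have : Nonempty (Fin n) := ⟨i⟩
  simp [secPayoff, range_const]

theorem secPayoff_update_const {i : Fin n} {t : ℝ} (ht : t ≤ P) :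
    secPayoff n P (update (fun _ => P) i t) i = -P := by
  have hmin : sInf (range (update (fun _ => P) i t)) = t :=
    sInf_range_update_of_forall_le fun _ _ => ht
  simp [secPayoff, hmin]

theorem secPayoff_update_of_lt {s : Fin n → ℝ} {i j : Fin n} {t : ℝ} (hij : i ≠ j)
    (hlt : s i < t) : secPayoff n P (update s j t) j = -t := by
  have hmin := sInf_range_update_lt hij hlt
  simp [secPayoff, hmin.ne']

theorem neg_secPayoff_le {s : Fin n → ℝ} {j : Fin n} (hj : s j ≤ P) :
    -secPayoff n P s j ≤ P := by
  unfold secPayoff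
  split_ifs <;> simp [hj]

theorem sInf_range_lt_neg_secPayoff {s : Fin n → ℝ} (hm : sInf (range s) < P) (j : Fin n) :
    sInf (range s) < -secPayoff n P s j := by
  unfold secPayoff
  split_ifs with hj
  · simpa using hm
  · simpa using (csInf_le (finite_range s).bddBelow (mem_range_self j)).lt_of_ne' hj

theorem secNash_const : secNash n P (fun _ => P) := fun i _ ht => by
  rw [secPayoff_update_const ht.2, secPayoff_const]

theorem secNash.sInf_range_eq {s : Fin n → ℝ} (h : secNash n P s) (hn : 2 ≤ n)
    (hs : ∀ i, s i ∈ Icc (0 : ℝ) P) : sInf (range s) = P := by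
  have : Nontrivial (Fin n) := Fin.nontrivial_iff_two_le.mpr hn
  set m := sInf (range s)
  obtain ⟨i, hi⟩ : ∃ i, s i = m := exists_eq_ciInf_of_finite
  by_contra hmP
  have hm : m < P := lt_of_le_of_ne (hi ▸ (hs i).2) hmP
  obtain ⟨j, hij⟩ := exists_ne i
  set c := -secPayoff n P s j
  have hmc : m < c := sInf_range_lt_neg_secPayoff hm j
  have hm0 : 0 ≤ m := hi ▸ (hs i).1
  have hcP : c ≤ P := neg_secPayoff_le (hs j).2
  have hdev := h j ((m + c) / 2) ⟨by linarith, by linarith⟩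
  rw [secPayoff_update_of_lt hij.symm (by rw [hi]; linarith)] at hdev
  linarith

end SecurityGame

theorem security_unique_pure_nash_general (n : ℕ) (hn : 2 ≤ n) (P : ℝ)
    (s : Fin n → ℝ) (hs : ∀ i, s i ∈ Set.Icc (0:ℝ) P) :
    secNash n P s ↔ s = fun _ => P := by
  constructor
  · intro h
    funext i
    have hmin := h.sInf_range_eq hn hs
    exact le_antisymm (hs i).2 (hmin ▸ csInf_le (finite_range s).bddBelow (mem_range_self i))
  · rintro rfl
    exact secNash_const

/-- The unique pure Nash equilibrium of the security game is the all-`P` profile. -/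
theorem security_unique_pure_nash (n : ℕ) (hn : 2 ≤ n) (P : ℝ) (hP : 0 < P)
    (s : Fin n → ℝ) (hs : ∀ i, s i ∈ Set.Icc (0:ℝ) P) :
    secNash n P s ↔ s = fun _ => P :=
  security_unique_pure_nash_general n hn P s hs
end

section
/- In the security game with n ≥ 2 players and penalty P > 0, the mixed-strategy profile where every player draws her level from the c.d.f. F(s) = 1 − (1 − s/P)^{1/(n−1)} on [0,P] is an ε-equilibrium for ε = P/4: no player can increase her expected utility by more than P/4 by switching to any pure strategy s ∈ [0,P]. -/
open MeasureTheory

/-- The c.d.f. `F(s) = 1 - (1 - s/P)^{1/(n-1)}` on `[0,P)`, `0` below `0`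
and `1` above `P`. -/
noncomputable def secF (n : ℕ) (P : ℝ) (s : ℝ) : ℝ :=
  if s ≤ 0 then 0
  else if s < P then 1 - (1 - s / P) ^ ((1:ℝ) / ((n:ℝ) - 1))
  else 1

/-- Expected utility of a player choosing the deterministic level `s` against
`n - 1` opponents drawing i.i.d. levels with c.d.f. `secF`. -/
noncomputable def secEu (n : ℕ) (P : ℝ) (s : ℝ) : ℝ :=
  -P * (1 - secF n P s) ^ (n - 1) - s * (1 - (1 - secF n P s) ^ (n - 1))

/-! On `[0,P]` the probability `(1 - F s)^(n-1)` that all opponents choose a level above `s`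
equals `1 - s/P`, so a pure level `s` earns `-P + s(1 - s/P) ∈ [-P, -P + P/4]`. A deviation
therefore earns at most `-P + P/4`, while the mixed strategy, supported on `[0,P]`, earns at
least `-P`. -/

open Set

lemma ae_mem_Ioc_of_measure_Iic {α : Type*} [MeasurableSpace α] [LinearOrder α]
    [TopologicalSpace α] [ClosedIicTopology α] [OpensMeasurableSpace α]
    {μ : Measure α} [IsProbabilityMeasure μ] {a b : α}
    (ha : μ (Iic a) = 0) (hb : μ (Iic b) = 1) : ∀ᵐ x ∂μ, x ∈ Ioc a b := by
  have hgt : ∀ᵐ x ∂μ, x ∉ Iic a := measure_eq_zero_iff_ae_notMem.1 ha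
  have hle : ∀ᵐ x ∂μ, x ∈ Iic b := (mem_ae_iff_prob_eq_one measurableSet_Iic).2 hb
  filter_upwards [hgt, hle] with x hxa hxb
  exact ⟨not_le.1 hxa, hxb⟩

lemma le_integral_of_ae_mem_Icc {α : Type*} [MeasurableSpace α] {μ : Measure α}
    [IsProbabilityMeasure μ] {f : α → ℝ} {a b : ℝ} (hf : AEStronglyMeasurable f μ)
    (hab : ∀ᵐ x ∂μ, f x ∈ Icc a b) : a ≤ ∫ x, f x ∂μ := by
  have hint : Integrable f μ :=
    .of_bound hf (max |a| |b|) (hab.mono fun _ hx => abs_le_max_abs_abs hx.1 hx.2)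
  simpa using integral_mono_ae (integrable_const a) hint (hab.mono fun _ hx => hx.1)

lemma mul_one_sub_div_le {P : ℝ} (hP : 0 < P) (s : ℝ) : s * (1 - s / P) ≤ P / 4 := by
  have hsq : s * (1 - s / P) = P / 4 - (s - P / 2) ^ 2 / P := by
    field_simp
    ring
  rw [hsq]
  linarith [div_nonneg (sq_nonneg (s - P / 2)) hP.le]

@[fun_prop]
lemma measurable_secF (n : ℕ) (P : ℝ) : Measurable (secF n P) :=
  Measurable.ite measurableSet_Iic measurable_const
    (Measurable.ite measurableSet_Iio (by fun_prop) measurable_const)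

lemma measurable_secEu (n : ℕ) (P : ℝ) : Measurable (secEu n P) := by
  unfold secEu
  fun_prop

section

variable {n : ℕ} {P s : ℝ}

lemma secF_of_nonpos (hs : s ≤ 0) : secF n P s = 0 := by
  simp [secF, hs]

lemma secF_self (hP : 0 < P) : secF n P P = 1 := by
  simp [secF, hP.not_ge]

lemma one_sub_secF_pow (hn : 2 ≤ n) (hP : 0 < P) (hs : s ∈ Icc 0 P) :
    (1 - secF n P s) ^ (n - 1) = 1 - s / P := by
  obtain ⟨hs0, hsP⟩ := hs
  rcases hs0.eq_or_lt with rfl | hs0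
  · simp [secF_of_nonpos le_rfl]
  rcases hsP.eq_or_lt with rfl | hsP
  · simp [secF_self hs0, hs0.ne', show n - 1 ≠ 0 by omega]
  have hexp : (1 : ℝ) / ((n : ℝ) - 1) = ((n - 1 : ℕ) : ℝ)⁻¹ := by
    rw [Nat.cast_sub (by omega), Nat.cast_one, one_div]
  rw [secF, if_neg hs0.not_ge, if_pos hsP, sub_sub_cancel, hexp,
    Real.rpow_inv_natCast_pow (sub_nonneg.2 ((div_le_one hP).2 hsP.le)) (by omega)]

lemma secEu_eq (hn : 2 ≤ n) (hP : 0 < P) (hs : s ∈ Icc 0 P) :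
    secEu n P s = -P + s * (1 - s / P) := by
  rw [secEu, one_sub_secF_pow hn hP hs]
  field_simp
  ring

lemma secEu_mem_Icc (hn : 2 ≤ n) (hP : 0 < P) (hs : s ∈ Icc 0 P) :
    secEu n P s ∈ Icc (-P) (-P + P / 4) := by
  rw [secEu_eq hn hP hs]
  have hgain : 0 ≤ s * (1 - s / P) :=
    mul_nonneg hs.1 (sub_nonneg.2 ((div_le_one hP).2 hs.2))
  exact ⟨by linarith, by linarith [mul_one_sub_div_le hP s]⟩

end

/-- The symmetric mixed profile in which every player draws her level from the
c.d.f. `F(s) = 1 - (1 - s/P)^{1/(n-1)}` is an `ε`-equilibrium for `ε = P/4`: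
if `μ` is the player's own mixed strategy (a probability measure with c.d.f.
`secF`), then no deviation to a pure level `s' ∈ [0,P]` improves her expected
utility by more than `P/4`. -/
theorem security_mixed_epsilon_equilibrium (n : ℕ) (hn : 2 ≤ n) (P : ℝ) (hP : 0 < P)
    (μ : Measure ℝ) [IsProbabilityMeasure μ]
    (hcdf : ∀ s : ℝ, μ (Set.Iic s) = ENNReal.ofReal (secF n P s)) :
    ∀ s' ∈ Set.Icc (0:ℝ) P, secEu n P s' - ∫ s, secEu n P s ∂μ ≤ P / 4 := by
  intro s' hs'
  have hsupp : ∀ᵐ s ∂μ, s ∈ Icc 0 P :=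
    (ae_mem_Ioc_of_measure_Iic (a := 0) (b := P) (by simp [hcdf, secF_of_nonpos])
      (by simp [hcdf, secF_self hP])).mono fun _ hs => Ioc_subset_Icc_self hs
  have hmean : -P ≤ ∫ s, secEu n P s ∂μ :=
    le_integral_of_ae_mem_Icc (measurable_secEu n P).aestronglyMeasurable
      (hsupp.mono fun _ hs => secEu_mem_Icc hn hP hs)
  linarith [(secEu_mem_Icc hn hP hs').2]
end

section
/- In the TCP SACK game with n ≥ 2 players, capacity c > 0, all players at the default α_i = 1 (so A = n−1), and deviations bounded by α' ≤ K + 1 with α' ≥ 0 for some K ∈ ℕ, the profile (1,...,1) is an ε-equilibrium whenever ε ≥ c·K/n: for every α' ∈ [0, K+1], u(α') − u(1) ≤ c·K/n. -/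
/-- In the TCP SACK game with `n ≥ 2` players all at the default `α_i = 1`
(so the opponent sum is `A = n - 1`), capacity `c > 0`, and deviations bounded
to `α' ∈ [0, K+1]`, the default profile is an `ε`-equilibrium whenever
`ε ≥ c·K/n`: every allowed deviation gains at most `c·K/n ≤ ε` over the
default utility `u(1) = c/n`. -/
theorem tcp_default_epsilon_equilibrium (n K : ℕ) (hn : 2 ≤ n) (c ε : ℝ)
    (hc : 0 < c) (hε : c * K / n ≤ ε) :
    ∀ α' ∈ Set.Icc (0:ℝ) ((K:ℝ) + 1),
      c * α' / (((n:ℝ) - 1) + α') - c * 1 / (((n:ℝ) - 1) + 1) ≤ ε := by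
  intro α' hα
  obtain ⟨h0, h1⟩ := hα
  have hn1 : (2:ℝ) ≤ (n:ℝ) := by exact_mod_cast hn
  have hnpos : (0:ℝ) < n := by linarith
  have hd : (0:ℝ) < ((n:ℝ) - 1) + α' := by linarith
  have key : c * α' / (((n:ℝ) - 1) + α') ≤ c * ((K:ℝ) + 1) / n := by
    rw [div_le_div_iff₀ hd hnpos]
    have hK0 : (0:ℝ) ≤ (K:ℝ) := Nat.cast_nonneg K
    nlinarith [mul_nonneg (mul_nonneg hc.le (sub_nonneg.2 h1)) (by linarith : (0:ℝ) ≤ (n:ℝ) - 1),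
      mul_nonneg hc.le (mul_nonneg hK0 h0)]
  have : c * 1 / (((n:ℝ) - 1) + 1) = c / n := by ring_nf
  rw [this]
  have : c * ((K:ℝ) + 1) / n - c / n = c * K / n := by ring
  linarith [key, hε, this]
end

section
/- In the network formation game on n ≥ 3 nodes with utility u_i = −(s/n + l·Ed_i + r·Eb_i + m·deg(i)), if m < l/n then the complete directed graph (each node links to every other node) is the unique pure Nash equilibrium. -/
open scoped ENNReal
/-- A walk of length `k` from `i` to `j` in the directed graph whose
out-neighborhoods are given by `g`. -/
def netWalk {n : ℕ} (g : Fin n → Finset (Fin n)) (i j : Fin n) (k : ℕ) : Prop :=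
  ∃ f : ℕ → Fin n, f 0 = i ∧ f k = j ∧ ∀ m < k, f (m + 1) ∈ g (f m)

/-- Shortest-path (hop-count) distance from `i` to `j`; `⊤` if `j` is
unreachable from `i`. -/
noncomputable def netDist {n : ℕ} (g : Fin n → Finset (Fin n)) (i j : Fin n) : ℕ∞ :=
  ⨅ (k : ℕ) (_ : netWalk g i j k), (k : ℕ∞)

/-- Expected (hop-count) distance `Ed_i` from node `i` to a uniformly random
node, as an extended real (`⊤` if some node is unreachable from `i`). -/
noncomputable def netEd {n : ℕ} (g : Fin n → Finset (Fin n)) (i : Fin n) : EReal :=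
  (((n:ℝ)⁻¹ : ℝ) : EReal) * ∑ j, ((netDist g i j : ℝ≥0∞) : EReal)

/-- Utility of node `i`: `u_i = -(s/n + l·Ed_i + r·Eb_i + m·deg(i))`, taking
the value `⊥` (i.e. `-∞`) when some node is unreachable from `i`. -/
noncomputable def netU {n : ℕ} (s l r m : ℝ)
    (Eb : (Fin n → Finset (Fin n)) → Fin n → ℝ)
    (g : Fin n → Finset (Fin n)) (i : Fin n) : EReal :=
  -(((s / n + r * Eb g i + m * (g i).card : ℝ) : EReal) + ((l : ℝ) : EReal) * netEd g i)

/-- Pure Nash equilibrium of the network formation game: no node can strictly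
increase its utility by unilaterally changing its set of outgoing links. -/
def netNash {n : ℕ} (s l r m : ℝ)
    (Eb : (Fin n → Finset (Fin n)) → Fin n → ℝ)
    (g : Fin n → Finset (Fin n)) : Prop :=
  ∀ i : Fin n, ∀ T : Finset (Fin n), i ∉ T →
    netU s l r m Eb (Function.update g i T) i ≤ netU s l r m Eb g i

/-!
Whatever the other nodes do, a node `i` with out-degree `c` (and no self-loop) is at distance
at least `1` from its `c` out-neighbours and at least `2` from the other `n - 1 - c` nodes, so its
distance sum is at least `2(n - 1) - c`, with equality when it links to everyone. Its cost
therefore exceeds that of linking to every node by at least `(l/n - m)(n - 1 - c)`, which is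
positive unless `c = n - 1`: linking to every node is each node's unique best response.
-/

open Finset

section Distance

variable {n : ℕ} {g : Fin n → Finset (Fin n)} {i j : Fin n}

lemma netDist_self : netDist g i i = 0 :=
  nonpos_iff_eq_zero.mp <| iInf₂_le_of_le 0 ⟨fun _ => i, rfl, rfl, by simp⟩ le_rfl

lemma netDist_le_one (h : j ∈ g i) : netDist g i j ≤ 1 :=
  iInf₂_le_of_le 1 ⟨fun k => if k = 0 then i else j, by simp, by simp, by simpa using h⟩
    (by simp)

lemma one_le_netDist (h : j ≠ i) : 1 ≤ netDist g i j := by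
  refine le_iInf₂ fun k ⟨f, hf0, hfk, _⟩ => ?_
  rcases k with _ | k
  · exact absurd (hfk.symm.trans hf0) h
  · simp

lemma two_le_netDist (hji : j ≠ i) (hj : j ∉ g i) : 2 ≤ netDist g i j := by
  refine le_iInf₂ fun k ⟨f, hf0, hfk, hstep⟩ => ?_
  match k with
  | 0 => exact absurd (hfk.symm.trans hf0) hji
  | 1 => exact absurd (hf0 ▸ hfk ▸ hstep 0 one_pos) hj
  | k + 2 => exact_mod_cast (by omega : 2 ≤ k + 2)

lemma sum_netDist_of_eq_erase (h : g i = univ.erase i) :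
    ∑ j, netDist g i j = ((n - 1 : ℕ) : ℕ∞) := by
  have hd : ∀ j, netDist g i j = if j = i then 0 else 1 := fun j => by
    split_ifs with hji
    · rw [hji, netDist_self]
    · exact (netDist_le_one (by simp [h, hji])).antisymm (one_le_netDist hji)
  simp [hd, sum_ite, filter_ne']

lemma two_mul_le_sum_netDist_add_card :
    ((2 * (n - 1) : ℕ) : ℕ∞) ≤ ∑ j, netDist g i j + (g i).card := by
  calc ((2 * (n - 1) : ℕ) : ℕ∞) = ∑ j, if j = i then 0 else 2 := by
        simp [sum_ite, filter_ne', mul_comm]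
    _ ≤ ∑ j, (netDist g i j + if j ∈ g i then 1 else 0) := by
        refine sum_le_sum fun j _ => ?_
        split_ifs with hji hj hj
        · exact zero_le
        · exact zero_le
        · simpa [one_add_one_eq_two] using add_le_add (one_le_netDist (g := g) hji) (le_refl 1)
        · simpa using two_le_netDist hji hj
    _ = _ := by rw [sum_add_distrib, sum_boole]; simp

end Distance

section Utility

variable {n : ℕ} {s l r m : ℝ} {Eb : (Fin n → Finset (Fin n)) → Fin n → ℝ}
  {g : Fin n → Finset (Fin n)} {i : Fin n}

lemma netEd_eq_inv_mul_sum :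
    netEd g i =
      (((n : ℝ)⁻¹ : ℝ) : EReal) * (((∑ j, netDist g i j : ℕ∞) : ℝ≥0∞) : EReal) :=
  congrArg _ (map_sum
    ((⟨⟨(↑), EReal.coe_ennreal_zero⟩, EReal.coe_ennreal_add⟩ : ℝ≥0∞ →+ EReal).comp
      ENat.toENNRealRingHom.toAddMonoidHom) _ _).symm

lemma netU_eq_of_sum_netDist_eq {k : ℕ} (h : ∑ j, netDist g i j = k) :
    netU s l r m Eb g i = ((-(s / n + r * Eb g i + m * (g i).card + l * k / n) : ℝ) : EReal) := by
  have hk : ((k : ℝ≥0∞) : EReal) = ((k : ℝ) : EReal) := by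
    simpa using EReal.coe_nnreal_eq_coe_real k
  rw [netU, netEd_eq_inv_mul_sum, h, ENat.toENNReal_coe, hk, ← EReal.coe_mul, ← EReal.coe_mul,
    ← EReal.coe_add, ← EReal.coe_neg]
  ring_nf

lemma netU_eq_bot_of_sum_netDist_eq_top (hl : 0 < l) (h : ∑ j, netDist g i j = ⊤) :
    netU s l r m Eb g i = ⊥ := by
  have hn : (0 : ℝ) < (n : ℝ)⁻¹ := inv_pos.mpr (Nat.cast_pos.mpr i.pos)
  rw [netU, netEd_eq_inv_mul_sum, h, ENat.toENNReal_top, EReal.coe_ennreal_top,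
    EReal.coe_mul_top_of_pos hn, EReal.coe_mul_top_of_pos hl, EReal.coe_add_top, EReal.neg_top]

lemma netU_eq_of_eq_erase (h : g i = univ.erase i) :
    netU s l r m Eb g i = ((-(s / n + r * Eb g i + (m + l / n) * (n - 1))) : ℝ) := by
  rw [netU_eq_of_sum_netDist_eq (sum_netDist_of_eq_erase h), h, card_erase_of_mem (mem_univ i),
    card_fin, Nat.cast_sub (i.pos : 1 ≤ n)]
  ring_nf

lemma netU_le_complete_sub (hl : 0 < l) :
    netU s l r m Eb g i ≤ ((-(s / n + r * Eb g i + (m + l / n) * (n - 1))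
      - (l / n - m) * (n - 1 - (g i).card) : ℝ) : EReal) := by
  have hbound := two_mul_le_sum_netDist_add_card (g := g) (i := i)
  cases hD : ∑ j, netDist g i j using ENat.recTopCoe with
  | top => rw [netU_eq_bot_of_sum_netDist_eq_top hl hD]; exact bot_le
  | coe k =>
    rw [netU_eq_of_sum_netDist_eq hD, EReal.coe_le_coe_iff]
    rw [hD] at hbound
    have hk : 2 * ((n : ℝ) - 1) ≤ k + (g i).card := by
      have : 2 * (n - 1) ≤ k + (g i).card := by exact_mod_cast hbound
      have := (Nat.cast_le (α := ℝ)).mpr this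
      push_cast [Nat.cast_sub (i.pos : 1 ≤ n)] at this
      exact this
    have hn : (0 : ℝ) < n := Nat.cast_pos.mpr i.pos
    have := mul_le_mul_of_nonneg_left (by linarith : 2 * ((n : ℝ) - 1) - (g i).card ≤ k)
      (div_pos hl hn).le
    have hlk : l * k / n = l / n * k := by ring
    linarith

end Utility

section Comparison

variable {n : ℕ} {s l r m : ℝ} {Eb : (Fin n → Finset (Fin n)) → Fin n → ℝ}
  {g g' : Fin n → Finset (Fin n)} {i : Fin n}

lemma card_le_sub_one_of_notMem (hi : i ∉ g i) : ((g i).card : ℝ) ≤ n - 1 := by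
  have := card_le_card (subset_erase.mpr ⟨subset_univ _, hi⟩)
  rw [card_erase_of_mem (mem_univ i), card_fin] at this
  have := (Nat.cast_le (α := ℝ)).mpr this
  rwa [Nat.cast_sub (i.pos : 1 ≤ n), Nat.cast_one] at this

lemma netU_le_netU_of_eq_erase (hl : 0 < l) (hml : m ≤ l / n) (hi : i ∉ g i)
    (hg' : g' i = univ.erase i) (hE : Eb g i = Eb g' i) :
    netU s l r m Eb g i ≤ netU s l r m Eb g' i :=
  calc netU s l r m Eb g i
      ≤ ((-(s / n + r * Eb g i + (m + l / n) * (n - 1))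
          - (l / n - m) * (n - 1 - (g i).card) : ℝ) : EReal) := netU_le_complete_sub hl
    _ ≤ ((-(s / n + r * Eb g i + (m + l / n) * (n - 1))) : ℝ) := EReal.coe_le_coe_iff.mpr <|
        sub_le_self _ <| mul_nonneg (sub_nonneg.mpr hml)
          (sub_nonneg.mpr (card_le_sub_one_of_notMem hi))
    _ = netU s l r m Eb g' i := by rw [netU_eq_of_eq_erase hg', hE]

lemma eq_erase_of_netU_le_netU (hl : 0 < l) (hml : m < l / n) (hi : i ∉ g i)
    (hg' : g' i = univ.erase i) (hE : Eb g i = Eb g' i)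
    (h : netU s l r m Eb g' i ≤ netU s l r m Eb g i) :
    g i = univ.erase i := by
  have hle := (h.trans (netU_le_complete_sub hl)).trans_eq' (netU_eq_of_eq_erase hg')
  rw [hE, EReal.coe_le_coe_iff, le_sub_self_iff] at hle
  have hcard : (n : ℝ) - 1 ≤ (g i).card :=
    sub_nonpos.mp (nonpos_of_mul_nonpos_right hle (sub_pos.mpr hml))
  refine eq_of_subset_of_card_le (subset_erase.mpr ⟨subset_univ _, hi⟩) ?_
  rw [card_erase_of_mem (mem_univ i), card_fin]
  rw [← Nat.cast_one, ← Nat.cast_sub (i.pos : 1 ≤ n)] at hcard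
  exact_mod_cast hcard

end Comparison

theorem network_complete_unique_nash_general (n : ℕ) (s l r m : ℝ)
    (hl : 0 < l) (hml : m < l / n)
    (Eb : (Fin n → Finset (Fin n)) → Fin n → ℝ)
    (hEb : ∀ g (i : Fin n) (T : Finset (Fin n)), Eb (Function.update g i T) i = Eb g i) :
    ∀ g : Fin n → Finset (Fin n), (∀ i, i ∉ g i) →
      (netNash s l r m Eb g ↔ ∀ i, g i = Finset.univ.erase i) := by
  intro g hg
  constructor
  · intro hNash i
    exact eq_erase_of_netU_le_netU hl hml (hg i) (Function.update_self i _ g)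
      (hEb g i _).symm (hNash i _ (notMem_erase i univ))
  · intro hcomplete i T hiT
    exact netU_le_netU_of_eq_erase hl hml.le (by rwa [Function.update_self]) (hcomplete i)
      (hEb g i T)

/-- If link maintenance is cheap (`m < l/n`), the complete directed graph is
the unique pure Nash equilibrium of the network formation game (assuming, as
in the paper's analysis, that a node's routing burden `Eb_i` is unaffected by
its own link choices). -/
theorem network_complete_unique_nash (n : ℕ) (hn : 3 ≤ n) (s l r m : ℝ)
    (hs : 0 < s) (hl : 0 < l) (hr : 0 < r) (hm : 0 < m) (hml : m < l / n)
    (Eb : (Fin n → Finset (Fin n)) → Fin n → ℝ)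
    (hEb : ∀ g (i : Fin n) (T : Finset (Fin n)), Eb (Function.update g i T) i = Eb g i) :
    ∀ g : Fin n → Finset (Fin n), (∀ i, i ∉ g i) →
      (netNash s l r m Eb g ↔ ∀ i, g i = Finset.univ.erase i) :=
  network_complete_unique_nash_general n s l r m hl hml Eb hEb
end

section
/- In the security game, for any profile where k players (1 ≤ k ≤ n) choose the common minimum level s_min and the rest choose strictly larger levels, if the profile is a pure Nash equilibrium then s_min = P and k = n. -/
/-- If a profile of the security game (where the `k ≥ 1` minimizers choose the
common minimum level and everyone else chooses a strictly larger level) is a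
pure Nash equilibrium, then the minimum level is `P` and all `n` players are
minimizers. -/
theorem security_nash_forces_all_P (n : ℕ) (hn : 2 ≤ n) (P : ℝ) (hP : 0 < P)
    (s : Fin n → ℝ) (hs : ∀ i, s i ∈ Set.Icc (0:ℝ) P)
    (hNash : secNash n P s) :
    sInf (Set.range s) = P ∧
    Nat.card {i : Fin n // s i = sInf (Set.range s)} = n := by
  have hne0 : Nonempty (Fin n) := ⟨⟨0, by omega⟩⟩
  have hne : (Set.range s).Nonempty := Set.range_nonempty _
  have hfin : (Set.range s).Finite := Set.finite_range s
  set m := sInf (Set.range s) with hm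
  have hmem : m ∈ Set.range s := hne.csInf_mem hfin
  have hbdd : BddBelow (Set.range s) := hfin.bddBelow
  have hle : ∀ i, m ≤ s i := fun i => csInf_le hbdd ⟨i, rfl⟩
  obtain ⟨i0, hi0⟩ := hmem
  have hm0 : 0 ≤ m := hi0 ▸ (hs i0).1
  have hmP : m ≤ P := hi0 ▸ (hs i0).2
  have key : ∀ (j i : Fin n), i ≠ j → s i = m → ∀ t : ℝ, m < t → t ≤ P →
      secPayoff n P (Function.update s j t) j = -t := by
    intro j i hij hsi t hmt htP
    have h1 : sInf (Set.range (Function.update s j t)) = m := by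
      apply le_antisymm
      · exact csInf_le (Set.finite_range _).bddBelow
          ⟨i, by rw [Function.update_of_ne hij, hsi]⟩
      · apply le_csInf (Set.range_nonempty _)
        rintro x ⟨l, rfl⟩
        rcases eq_or_ne l j with rfl | hl
        · rw [Function.update_self]; exact hmt.le
        · rw [Function.update_of_ne hl]; exact hle l
    rw [secPayoff, h1, Function.update_self, if_neg hmt.ne']
  have hmeqP : m = P := by
    by_contra hne'
    have hmP' : m < P := lt_of_le_of_ne hmP hne'
    by_cases hall : ∀ j, s j = m
    · have hcard : 1 < Fintype.card (Fin n) := by simp; omega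
      obtain ⟨j, hj⟩ := Fintype.exists_ne_of_one_lt_card hcard i0
      have h1 : m < (m + P) / 2 := by linarith
      have h2 : (m + P) / 2 < P := by linarith
      have hn' := hNash j ((m + P) / 2) ⟨by linarith, h2.le⟩
      rw [key j i0 hj.symm hi0 _ h1 h2.le] at hn'
      rw [secPayoff, if_pos (by rw [hall j])] at hn'
      linarith
    · push_neg at hall
      obtain ⟨j, hj⟩ := hall
      have hjm : m < s j := lt_of_le_of_ne (hle j) (Ne.symm hj)
      have hij : i0 ≠ j := by intro h; exact hj (h ▸ hi0)
      have h1 : m < (m + s j) / 2 := by linarith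
      have h2 : (m + s j) / 2 < s j := by linarith
      have h3 : (m + s j) / 2 ≤ P := by have := (hs j).2; linarith
      have hn' := hNash j ((m + s j) / 2) ⟨by linarith, h3⟩
      rw [key j i0 hij hi0 _ h1 h3] at hn'
      rw [secPayoff, if_neg hj] at hn'
      linarith
  refine ⟨hmeqP, ?_⟩
  have hall : ∀ i, s i = m := fun i => le_antisymm (hmeqP ▸ (hs i).2) (hle i)
  rw [Nat.card_congr (Equiv.subtypeUnivEquiv hall), Nat.card_eq_fintype_card,
    Fintype.card_fin]
end
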